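/- arXiv:1811.12172 — 2 statements merged into one kernel-verified Lean document; each statement's English description precedes it below -/
import Mathlib

section
/- Let $A_+^1,\ldots,A_+^K$ be symmetric positive semidefinite $n\times n$ matrices and $\Lambda^1,\ldots,\Lambda^K$ diagonal $d\times d$ matrices with nonnegative entries. Let $U^{\mathrm{old}}$ be an $n\times d$ matrix with orthonormal columns, and let $U^{\mathrm{new}} = BC^T$ where $B\Sigma C^T$ is a singular value decomposition of $M = \sum_{k=1}^K A_+^k U^{\mathrm{old}} \Lambda^k$ (with $B$ $n\times d$ having orthonormal columns, $C$ $d\times d$ orthogonal). Then $\sum_{k=1}^K \|A_+^k - U^{\mathrm{new}}\Lambda^k (U^{\mathrm{new}})^T\|_F^2 \le \sum_{k=1}^K \|A_+^k - U^{\mathrm{old}}\Lambda^k (U^{\mathrm{old}})^T\|_F^2$. -/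
open Matrix

noncomputable def frobSq {n d : ℕ} (M : Matrix (Fin n) (Fin d) ℝ) : ℝ :=
  Matrix.trace (Mᵀ * M)

/-! For `U` with orthonormal columns, `‖A - U Λ Uᵀ‖² = ‖A‖² - 2 tr(Uᵀ A U Λ) + ‖Λ‖²`, so the claim
is that `f U = ∑ₖ tr(Uᵀ Aₖ U Λₖ)` does not decrease. As `Aₖ ⪰ 0` and `Λₖ ≥ 0`, `f` is convex:
`f Unew ≥ f Uold + 2 tr((Unew - Uold)ᵀ M)` with `M = ∑ₖ Aₖ Uold Λₖ = B Σ Cᵀ`. And `Unew = B Cᵀ`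
maximizes `tr(Uᵀ M)` over matrices with orthonormal columns, since
`tr(Uᵀ B Σ Cᵀ) = ∑ᵢ σᵢ ((U C)ᵀ B)ᵢᵢ ≤ ∑ᵢ σᵢ`, the diagonal entries of `Xᵀ Y` being at most `1` when
`X` and `Y` have orthonormal columns; equality holds at `U C = B`. -/

lemma frobSq_sub_mul_diagonal_mul_transpose {n d : ℕ} (A : Matrix (Fin n) (Fin n) ℝ)
    {U : Matrix (Fin n) (Fin d) ℝ} (hU : Uᵀ * U = 1) (w : Fin d → ℝ) :
    frobSq (A - U * diagonal w * Uᵀ) =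
      frobSq A - 2 * trace (Uᵀ * A * U * diagonal w) + frobSq (diagonal w) := by
  have hcross₁ : trace (Aᵀ * (U * diagonal w * Uᵀ)) = trace (Uᵀ * A * U * diagonal w) := by
    rw [← trace_transpose]
    simp only [transpose_mul, transpose_transpose, diagonal_transpose, Matrix.mul_assoc]
    rw [trace_mul_comm, Matrix.mul_assoc, trace_mul_comm (diagonal w)]
    simp only [Matrix.mul_assoc]
  have hcross₂ : trace ((U * diagonal w * Uᵀ)ᵀ * A) = trace (Uᵀ * A * U * diagonal w) := by
    simp only [transpose_mul, transpose_transpose, diagonal_transpose, Matrix.mul_assoc]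
    rw [trace_mul_comm, Matrix.mul_assoc, trace_mul_comm (diagonal w)]
    simp only [Matrix.mul_assoc]
  have hsq : trace ((U * diagonal w * Uᵀ)ᵀ * (U * diagonal w * Uᵀ)) = frobSq (diagonal w) := by
    simp only [frobSq, transpose_mul, transpose_transpose, diagonal_transpose, Matrix.mul_assoc]
    rw [← Matrix.mul_assoc Uᵀ U, hU, Matrix.one_mul, trace_mul_comm]
    simp only [Matrix.mul_assoc]
    rw [hU, Matrix.mul_one]
  unfold frobSq at *
  rw [transpose_sub, sub_mul, mul_sub, mul_sub, trace_sub, trace_sub, trace_sub, hcross₁, hcross₂,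
    hsq]
  ring

section
variable {m r : Type*} [Fintype m] [Fintype r] [DecidableEq r]

lemma trace_mul_diagonal_eq_sum (X : Matrix r r ℝ) (w : r → ℝ) :
    trace (X * diagonal w) = ∑ i, X i i * w i := by
  simp [trace, mul_diagonal]

lemma trace_transpose_mul_mul_mul_diagonal_nonneg {A : Matrix m m ℝ} (hA : A.PosSemidef)
    (X : Matrix m r ℝ) {w : r → ℝ} (hw : ∀ i, 0 ≤ w i) :
    0 ≤ trace (Xᵀ * A * X * diagonal w) := by
  have hX : (Xᵀ * A * X).PosSemidef := by simpa using hA.conjTranspose_mul_mul_same X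
  rw [trace_mul_diagonal_eq_sum]
  exact Finset.sum_nonneg fun i _ => mul_nonneg hX.diag_nonneg (hw i)

lemma trace_add_two_mul_trace_le_of_posSemidef {A : Matrix m m ℝ} (hA : A.PosSemidef)
    (U V : Matrix m r ℝ) {w : r → ℝ} (hw : ∀ i, 0 ≤ w i) :
    trace (Uᵀ * A * U * diagonal w) + 2 * trace ((V - U)ᵀ * (A * U * diagonal w)) ≤
      trace (Vᵀ * A * V * diagonal w) := by
  have hnn := trace_transpose_mul_mul_mul_diagonal_nonneg hA (V - U) hw
  have hcross : trace (Uᵀ * A * V * diagonal w) = trace (Vᵀ * A * U * diagonal w) := by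
    have hAt : Aᵀ = A := hA.isHermitian
    rw [← trace_transpose, trace_mul_comm]
    simp only [transpose_mul, transpose_transpose, diagonal_transpose, hAt, Matrix.mul_assoc]
  simp only [transpose_sub, Matrix.sub_mul, Matrix.mul_sub, trace_sub, Matrix.mul_assoc]
    at hnn hcross ⊢
  linarith

lemma sum_trace_add_two_mul_trace_le_of_posSemidef {ι : Type*} [Fintype ι]
    {A : ι → Matrix m m ℝ} (hA : ∀ k, (A k).PosSemidef) {w : ι → r → ℝ}
    (hw : ∀ k i, 0 ≤ w k i) (U V : Matrix m r ℝ) :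
    ∑ k, trace (Uᵀ * A k * U * diagonal (w k)) +
        2 * trace ((V - U)ᵀ * ∑ k, A k * U * diagonal (w k)) ≤
      ∑ k, trace (Vᵀ * A k * V * diagonal (w k)) := by
  rw [Matrix.mul_sum, trace_sum, Finset.mul_sum, ← Finset.sum_add_distrib]
  exact Finset.sum_le_sum fun k _ => trace_add_two_mul_trace_le_of_posSemidef (hA k) U V (hw k)

lemma transpose_mul_apply_self_le_one {X Y : Matrix m r ℝ} (hX : Xᵀ * X = 1) (hY : Yᵀ * Y = 1)
    (i : r) : (Xᵀ * Y) i i ≤ 1 := by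
  have h := (posSemidef_conjTranspose_mul_self (X - Y)).diag_nonneg (i := i)
  have hYX : (Yᵀ * X) i i = (Xᵀ * Y) i i := by
    rw [← transpose_transpose (Yᵀ * X), transpose_mul, transpose_transpose]; rfl
  simp only [conjTranspose_eq_transpose_of_trivial, transpose_sub, Matrix.sub_mul,
    Matrix.mul_sub, hX, hY, Matrix.sub_apply, one_apply_eq, hYX] at h
  linarith

lemma trace_transpose_mul_mul_diagonal_le {X Y : Matrix m r ℝ} (hX : Xᵀ * X = 1)
    (hY : Yᵀ * Y = 1) {σ : r → ℝ} (hσ : ∀ i, 0 ≤ σ i) :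
    trace (Xᵀ * Y * diagonal σ) ≤ ∑ i, σ i := by
  rw [trace_mul_diagonal_eq_sum]
  exact Finset.sum_le_sum fun i _ =>
    mul_le_of_le_one_left (hσ i) (transpose_mul_apply_self_le_one hX hY i)

/-- Orthogonal Procrustes: among matrices with orthonormal columns, `B * Cᵀ` maximizes
`U ↦ tr(Uᵀ M)` for `M = B * diagonal σ * Cᵀ`. -/
lemma trace_transpose_mul_le_of_svd {B : Matrix m r ℝ} {C : Matrix r r ℝ} (hB : Bᵀ * B = 1)
    (hC : Cᵀ * C = 1) {σ : r → ℝ} (hσ : ∀ i, 0 ≤ σ i) {U : Matrix m r ℝ} (hU : Uᵀ * U = 1) :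
    trace (Uᵀ * (B * diagonal σ * Cᵀ)) ≤ trace ((B * Cᵀ)ᵀ * (B * diagonal σ * Cᵀ)) := by
  have hcycle : ∀ V : Matrix m r ℝ,
      trace (Vᵀ * (B * diagonal σ * Cᵀ)) = trace ((V * C)ᵀ * B * diagonal σ) := by
    intro V
    rw [trace_mul_comm, transpose_mul, Matrix.mul_assoc, Matrix.mul_assoc, trace_mul_comm]
    simp only [Matrix.mul_assoc]
    rw [trace_mul_comm (diagonal σ)]
    simp only [Matrix.mul_assoc]
  have hUC : (U * C)ᵀ * (U * C) = 1 := by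
    rw [transpose_mul, Matrix.mul_assoc, ← Matrix.mul_assoc Uᵀ, hU, Matrix.one_mul, hC]
  rw [hcycle, hcycle, Matrix.mul_assoc B, hC, Matrix.mul_one, hB, Matrix.one_mul, trace_diagonal]
  exact trace_transpose_mul_mul_diagonal_le hUC hB hσ

end

theorem stmt_3_general (n d K : ℕ)
    (A : Fin K → Matrix (Fin n) (Fin n) ℝ)
    (Λ : Fin K → Fin d → ℝ)
    (hA : ∀ k, (A k).PosSemidef)
    (hΛ : ∀ k j, 0 ≤ Λ k j)
    (Uold : Matrix (Fin n) (Fin d) ℝ)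
    (hUold : Uoldᵀ * Uold = 1)
    (B : Matrix (Fin n) (Fin d) ℝ) (σ : Fin d → ℝ) (C : Matrix (Fin d) (Fin d) ℝ)
    (hB : Bᵀ * B = 1) (hσ : ∀ i, 0 ≤ σ i)
    (hC : Cᵀ * C = 1)
    (hSVD : (∑ k, A k * Uold * Matrix.diagonal (Λ k)) = B * Matrix.diagonal σ * Cᵀ)
    (Unew : Matrix (Fin n) (Fin d) ℝ)
    (hUnew : Unew = B * Cᵀ) :
    ∑ k, frobSq (A k - Unew * Matrix.diagonal (Λ k) * Unewᵀ) ≤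
      ∑ k, frobSq (A k - Uold * Matrix.diagonal (Λ k) * Uoldᵀ) := by
  have hUnew_orth : Unewᵀ * Unew = 1 := by
    rw [hUnew, transpose_mul, transpose_transpose, Matrix.mul_assoc, ← Matrix.mul_assoc Bᵀ, hB,
      Matrix.one_mul, mul_eq_one_comm.mp hC]
  have hmajorize := sum_trace_add_two_mul_trace_le_of_posSemidef hA hΛ Uold Unew
  have hprocrustes := trace_transpose_mul_le_of_svd hB hC hσ hUold
  rw [hSVD, transpose_sub, Matrix.sub_mul, trace_sub] at hmajorize
  rw [← hUnew] at hprocrustes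
  simp only [frobSq_sub_mul_diagonal_mul_transpose _ hUold,
    frobSq_sub_mul_diagonal_mul_transpose _ hUnew_orth, Finset.sum_add_distrib,
    Finset.sum_sub_distrib, ← Finset.mul_sum]
  linarith

theorem stmt_3 (n d K : ℕ)
    (A : Fin K → Matrix (Fin n) (Fin n) ℝ)
    (Λ : Fin K → Fin d → ℝ)
    (hA : ∀ k, (A k).PosSemidef)
    (hΛ : ∀ k j, 0 ≤ Λ k j)
    (Uold : Matrix (Fin n) (Fin d) ℝ)
    (hUold : Uoldᵀ * Uold = 1)
    (B : Matrix (Fin n) (Fin d) ℝ) (σ : Fin d → ℝ) (C : Matrix (Fin d) (Fin d) ℝ)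
    (hB : Bᵀ * B = 1) (hσ : ∀ i, 0 ≤ σ i)
    (hC : Cᵀ * C = 1) (hC' : C * Cᵀ = 1)
    (hSVD : (∑ k, A k * Uold * Matrix.diagonal (Λ k)) = B * Matrix.diagonal σ * Cᵀ)
    (Unew : Matrix (Fin n) (Fin d) ℝ)
    (hUnew : Unew = B * Cᵀ) :
    ∑ k, frobSq (A k - Unew * Matrix.diagonal (Λ k) * Unewᵀ) ≤
      ∑ k, frobSq (A k - Uold * Matrix.diagonal (Λ k) * Uoldᵀ) :=
  stmt_3_general n d K A Λ hA hΛ Uold hUold B σ C hB hσ hC hSVD Unew hUnew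
end

section
/- Let $A$ be a symmetric $n\times n$ real matrix. If $(\hat{U},\hat{\Lambda})$ solves $\min \|A_+ - U\Lambda U^T\|_F^2$ over $n\times d$ matrices $U$ with $U^TU=I_d$ and diagonal $\Lambda$ with nonnegative entries (where $A_+$ is the positive part of $A$), and $\hat{X} = \hat{U}\hat{\Lambda}^{1/2}$, then $\hat{X}$ also solves $\min_{X\in\mathbb{R}^{n\times d}} \|A - XX^T\|_F^2$. -/
/-!
Split `A = A₊ - A₋` with `A₋ = V diag(max (-D) 0) Vᵀ ⪰ 0` and `A₊ᵀ A₋ = 0`. For a Gram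
matrix `P = X Xᵀ` this gives
`‖A - P‖² = ‖A₊ - P‖² + 2 tr(P A₋) + ‖A₋‖² ≥ ‖A₊ - P‖² + ‖A₋‖²`.
By the spectral theorem the Gram matrices of `n × d` matrices are exactly the `U Λ Uᵀ` with
`UᵀU = 1`, `Λ ≥ 0`, so `X̂ X̂ᵀ = Û Λ̂ Ûᵀ` minimizes `‖A₊ - X Xᵀ‖²`. Equality holds at `X̂`: if
`Π` projects onto the positive eigenspace of `A`, then
`‖A₊ - P‖² = ‖A₊ - Π P Π‖² + ‖P - Π P Π‖²`, so optimality forces `Π P̂ Π = P̂`, whence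
`tr(P̂ A₋) = tr(P̂ Π A₋ Π) = 0`.
-/

open Matrix

section Frobenius

variable {n d : ℕ}

theorem frobSq_nonneg (M : Matrix (Fin n) (Fin d) ℝ) : 0 ≤ frobSq M := by
  simpa [frobSq, conjTranspose_eq_transpose_of_trivial] using
    (posSemidef_conjTranspose_mul_self M).trace_nonneg

theorem frobSq_eq_zero_iff {M : Matrix (Fin n) (Fin d) ℝ} : frobSq M = 0 ↔ M = 0 := by
  simpa [frobSq, conjTranspose_eq_transpose_of_trivial] using
    trace_conjTranspose_mul_self_eq_zero_iff (A := M)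

theorem frobSq_sub (M N : Matrix (Fin n) (Fin d) ℝ) :
    frobSq (M - N) = frobSq M - 2 * trace (Mᵀ * N) + frobSq N := by
  have h : trace (Nᵀ * M) = trace (Mᵀ * N) := by
    rw [← trace_transpose, transpose_mul, transpose_transpose]
  rw [frobSq, frobSq, frobSq, transpose_sub, Matrix.sub_mul, Matrix.mul_sub, Matrix.mul_sub,
    trace_sub, trace_sub, trace_sub, h]
  ring

theorem frobSq_eq_frobSq_mul_mul_add_frobSq_sub {P : Matrix (Fin n) (Fin n) ℝ} (hPt : Pᵀ = P)
    (hP : P * P = P) (M : Matrix (Fin n) (Fin n) ℝ) :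
    frobSq M = frobSq (P * M * P) + frobSq (M - P * M * P) := by
  have hcross : trace (Mᵀ * (P * M * P)) = frobSq (P * M * P) := by
    rw [frobSq, transpose_mul, transpose_mul, hPt]
    calc trace (Mᵀ * (P * M * P)) = trace (Mᵀ * (P * M * P) * P) := by
          simp only [Matrix.mul_assoc, hP]
      _ = trace (P * (Mᵀ * (P * M * P))) := trace_mul_comm _ _
      _ = trace (P * (Mᵀ * P) * (P * M * P)) := by
          simp only [Matrix.mul_assoc]
          rw [← Matrix.mul_assoc P P, hP]
  rw [frobSq_sub, hcross]
  ring

theorem frobSq_sub_sub_of_transpose_mul_eq_zero {Apos Aneg : Matrix (Fin n) (Fin n) ℝ}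
    (hApos : Aposᵀ * Aneg = 0) (P : Matrix (Fin n) (Fin n) ℝ) :
    frobSq (Apos - Aneg - P) = frobSq (Apos - P) + 2 * trace (Pᵀ * Aneg) + frobSq Aneg := by
  rw [sub_right_comm, frobSq_sub, transpose_sub, sub_mul, trace_sub, hApos, trace_zero]
  ring

end Frobenius

def IsGramMinimizer {n d : ℕ} (M : Matrix (Fin n) (Fin n) ℝ) (Y : Matrix (Fin n) (Fin d) ℝ) :
    Prop :=
  ∀ X : Matrix (Fin n) (Fin d) ℝ, frobSq (M - Y * Yᵀ) ≤ frobSq (M - X * Xᵀ)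

namespace IsGramMinimizer

variable {n d : ℕ} {M P : Matrix (Fin n) (Fin n) ℝ} {Y : Matrix (Fin n) (Fin d) ℝ}

theorem mul_mul_eq_self (hY : IsGramMinimizer M Y) (hPt : Pᵀ = P) (hP : P * P = P)
    (hM : P * M * P = M) : P * (Y * Yᵀ) * P = Y * Yᵀ := by
  have hPY : (P * Y) * (P * Y)ᵀ = P * (Y * Yᵀ) * P := by
    rw [transpose_mul, hPt]; simp only [Matrix.mul_assoc]
  have hsplit := frobSq_eq_frobSq_mul_mul_add_frobSq_sub hPt hP (M - Y * Yᵀ)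
  rw [Matrix.mul_sub, Matrix.sub_mul, hM, ← hPY, sub_sub_sub_cancel_left] at hsplit
  have hzero : frobSq ((P * Y) * (P * Y)ᵀ - Y * Yᵀ) = 0 :=
    le_antisymm (by linarith [hY (P * Y)]) (frobSq_nonneg _)
  rw [← hPY]
  exact sub_eq_zero.mp (frobSq_eq_zero_iff.mp hzero)

theorem sub_of_posSemidef {Aneg : Matrix (Fin n) (Fin n) ℝ} (hY : IsGramMinimizer M Y)
    (hM : Mᵀ * Aneg = 0) (hAneg : Aneg.PosSemidef) (hPt : Pᵀ = P) (hP : P * P = P)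
    (hPM : P * M * P = M) (hPAneg : Aneg * P = 0) : IsGramMinimizer (M - Aneg) Y := by
  intro X
  have hX : 0 ≤ trace ((X * Xᵀ)ᵀ * Aneg) := by
    rw [transpose_mul, transpose_transpose, Matrix.mul_assoc, trace_mul_comm]
    simpa [conjTranspose_eq_transpose_of_trivial] using
      (hAneg.conjTranspose_mul_mul_same X).trace_nonneg
  have hYAneg : trace ((Y * Yᵀ)ᵀ * Aneg) = 0 := by
    rw [← hY.mul_mul_eq_self hPt hP hPM, transpose_mul, transpose_mul, hPt, trace_mul_comm,
      ← mul_assoc, hPAneg, zero_mul, trace_zero]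
  rw [frobSq_sub_sub_of_transpose_mul_eq_zero hM, frobSq_sub_sub_of_transpose_mul_eq_zero hM,
    hYAneg]
  linarith [hY X]

end IsGramMinimizer

theorem exists_orthonormal_diagonal_eq_mul_transpose {n d : ℕ} (hd : d ≤ n)
    (X : Matrix (Fin n) (Fin d) ℝ) :
    ∃ (U : Matrix (Fin n) (Fin d) ℝ) (Λ : Fin d → ℝ),
      Uᵀ * U = 1 ∧ (∀ j, 0 ≤ Λ j) ∧ X * Xᵀ = U * diagonal Λ * Uᵀ := by
  have hB : (X * Xᵀ).PosSemidef := by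
    simpa [conjTranspose_eq_transpose_of_trivial] using posSemidef_self_mul_conjTranspose X
  set W : Matrix (Fin n) (Fin n) ℝ := ↑hB.isHermitian.eigenvectorUnitary
  set ν := hB.isHermitian.eigenvalues
  have hW : Wᵀ * W = 1 := by
    simpa [star_eq_conjTranspose, conjTranspose_eq_transpose_of_trivial] using
      mem_unitaryGroup_iff'.mp hB.isHermitian.eigenvectorUnitary.2
  have hspec : X * Xᵀ = W * diagonal ν * Wᵀ := by
    simpa [Unitary.conjStarAlgAut_apply, star_eq_conjTranspose,
      conjTranspose_eq_transpose_of_trivial] using hB.isHermitian.spectral_theorem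
  have hsupp : (Finset.univ.filter (fun k => ν k ≠ 0)).card ≤ d := by
    have := hB.isHermitian.rank_eq_card_non_zero_eigs
    rw [Fintype.card_subtype] at this
    exact this ▸ (rank_mul_le_left X Xᵀ).trans (rank_le_width X)
  -- at most `d` eigenvalues are nonzero: keep `d` eigenvectors covering all of them
  obtain ⟨T, hsuppT, hT⟩ := Finset.exists_superset_card_eq hsupp (by simpa using hd)
  set σ := T.orderEmbOfFin hT
  refine ⟨W.submatrix id σ, ν ∘ σ, ?_, fun j => hB.eigenvalues_nonneg _, ?_⟩
  · rw [transpose_submatrix, ← submatrix_mul _ _ _ _ _ Function.bijective_id, hW]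
    exact submatrix_one_embedding σ.toEmbedding
  · rw [hspec]
    ext a b
    rw [mul_apply, mul_apply]
    simp only [mul_diagonal, transpose_apply, submatrix_apply, id, Function.comp_apply]
    have hsum := Finset.sum_map Finset.univ σ.toEmbedding (fun k => W a k * ν k * W b k)
    rw [Finset.map_orderEmbOfFin_univ] at hsum
    refine ((Finset.sum_subset (Finset.subset_univ T) fun k _ hk => ?_).symm.trans hsum)
    have : ν k = 0 := by_contra fun h => hk (hsuppT (by simpa using h))
    simp [this]

theorem le_of_transpose_mul_self_eq_one {R : Type*} [Field R] {n d : ℕ}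
    {U : Matrix (Fin n) (Fin d) R} (hU : Uᵀ * U = 1) : d ≤ n := by
  simpa [hU, rank_one] using (rank_mul_le_left Uᵀ U).trans (rank_le_width Uᵀ)

section DiagonalConj

variable {ι R : Type*} [Fintype ι] [DecidableEq ι] [CommRing R] (V : Matrix ι ι R)

theorem transpose_mul_diagonal_mul_transpose (a : ι → R) :
    (V * diagonal a * Vᵀ)ᵀ = V * diagonal a * Vᵀ := by
  rw [transpose_mul, transpose_mul, transpose_transpose, diagonal_transpose, mul_assoc]

theorem mul_diagonal_mul_transpose_mul_mul_diagonal_mul_transpose (hV : Vᵀ * V = 1)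
    (a b : ι → R) :
    V * diagonal a * Vᵀ * (V * diagonal b * Vᵀ) = V * diagonal (a * b) * Vᵀ := by
  calc V * diagonal a * Vᵀ * (V * diagonal b * Vᵀ)
        = V * diagonal a * (Vᵀ * V) * diagonal b * Vᵀ := by simp only [Matrix.mul_assoc]
    _ = V * diagonal (a * b) * Vᵀ := by
        rw [hV, Matrix.mul_one, Matrix.mul_assoc V, diagonal_mul_diagonal]
        rfl

theorem mul_diagonal_mul_transpose_sub (a b : ι → R) :
    V * diagonal a * Vᵀ - V * diagonal b * Vᵀ = V * diagonal (a - b) * Vᵀ := by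
  rw [← Matrix.sub_mul, ← Matrix.mul_sub, diagonal_sub]
  rfl

end DiagonalConj

theorem IsGramMinimizer.conj_diagonal_of_posPart {n d : ℕ} {V : Matrix (Fin n) (Fin n) ℝ}
    (hV : Vᵀ * V = 1) {D : Fin n → ℝ} {Y : Matrix (Fin n) (Fin d) ℝ}
    (hY : IsGramMinimizer (V * diagonal (fun i => max (D i) 0) * Vᵀ) Y) :
    IsGramMinimizer (V * diagonal D * Vᵀ) Y := by
  set l : Fin n → ℝ := fun i => max (D i) 0
  set m : Fin n → ℝ := fun i => max (-D i) 0
  set c : Fin n → ℝ := fun i => if 0 < D i then 1 else 0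
  have hlm : l * m = 0 := by
    funext i
    rcases le_total (D i) 0 with h | h <;> simp [l, m, h]
  have hcc : c * c = c := by
    funext i
    by_cases h : 0 < D i <;> simp [c, h]
  have hclc : c * l * c = l := by
    funext i
    rcases lt_or_ge 0 (D i) with h | h <;> simp [c, l, h, h.not_gt]
  have hmc : m * c = 0 := by
    funext i
    rcases lt_or_ge 0 (D i) with h | h <;> simp [c, m, h, le_of_lt, h.not_gt]
  have hD : D = l - m := funext fun i => (max_zero_sub_max_neg_zero_eq_self (D i)).symm
  rw [hD, ← mul_diagonal_mul_transpose_sub]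
  refine hY.sub_of_posSemidef (P := V * diagonal c * Vᵀ) ?_ ?_
    (transpose_mul_diagonal_mul_transpose V c) ?_ ?_ ?_
  · rw [transpose_mul_diagonal_mul_transpose,
      mul_diagonal_mul_transpose_mul_mul_diagonal_mul_transpose V hV, hlm]
    simp
  · simpa [conjTranspose_eq_transpose_of_trivial] using
      (posSemidef_diagonal_iff.mpr fun i => le_max_right (-D i) 0).mul_mul_conjTranspose_same V
  · rw [mul_diagonal_mul_transpose_mul_mul_diagonal_mul_transpose V hV, hcc]
  · rw [mul_diagonal_mul_transpose_mul_mul_diagonal_mul_transpose V hV,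
      mul_diagonal_mul_transpose_mul_mul_diagonal_mul_transpose V hV, hclc]
  · rw [mul_diagonal_mul_transpose_mul_mul_diagonal_mul_transpose V hV, hmc]
    simp

theorem stmt_14_general (n d : ℕ)
    (A : Matrix (Fin n) (Fin n) ℝ)
    (V : Matrix (Fin n) (Fin n) ℝ) (D : Fin n → ℝ)
    (hV : Vᵀ * V = 1)
    (hdecomp : A = V * Matrix.diagonal D * Vᵀ)
    (Aplus : Matrix (Fin n) (Fin n) ℝ)
    (hAplus : Aplus = V * Matrix.diagonal (fun i => max (D i) 0) * Vᵀ)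
    (Uhat : Matrix (Fin n) (Fin d) ℝ) (Λhat : Fin d → ℝ)
    (hUhat : Uhatᵀ * Uhat = 1) (hΛhat : ∀ j, 0 ≤ Λhat j)
    (hopt : ∀ (U : Matrix (Fin n) (Fin d) ℝ) (Λ : Fin d → ℝ),
      Uᵀ * U = 1 → (∀ j, 0 ≤ Λ j) →
      frobSq (Aplus - Uhat * Matrix.diagonal Λhat * Uhatᵀ) ≤
        frobSq (Aplus - U * Matrix.diagonal Λ * Uᵀ))
    (Xhat : Matrix (Fin n) (Fin d) ℝ)
    (hXhat : Xhat = Uhat * Matrix.diagonal (fun j => Real.sqrt (Λhat j))) :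
    ∀ X : Matrix (Fin n) (Fin d) ℝ,
      frobSq (A - Xhat * Xhatᵀ) ≤ frobSq (A - X * Xᵀ) := by
  have hGram : Xhat * Xhatᵀ = Uhat * diagonal Λhat * Uhatᵀ := by
    rw [hXhat, transpose_mul, diagonal_transpose, ← Matrix.mul_assoc, Matrix.mul_assoc Uhat,
      diagonal_mul_diagonal]
    congr
    funext j
    exact Real.mul_self_sqrt (hΛhat j)
  rw [hdecomp]
  refine IsGramMinimizer.conj_diagonal_of_posPart hV ?_
  intro X
  obtain ⟨U, Λ, hU, hΛ, hX⟩ :=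
    exists_orthonormal_diagonal_eq_mul_transpose (le_of_transpose_mul_self_eq_one hUhat) X
  rw [← hAplus, hGram, hX]
  exact hopt U Λ hU hΛ

theorem stmt_14 (n d : ℕ)
    (A : Matrix (Fin n) (Fin n) ℝ)
    (hA : A.IsSymm)
    (V : Matrix (Fin n) (Fin n) ℝ) (D : Fin n → ℝ)
    (hV : Vᵀ * V = 1) (hV' : V * Vᵀ = 1)
    (hdecomp : A = V * Matrix.diagonal D * Vᵀ)
    (Aplus : Matrix (Fin n) (Fin n) ℝ)
    (hAplus : Aplus = V * Matrix.diagonal (fun i => max (D i) 0) * Vᵀ)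
    (Uhat : Matrix (Fin n) (Fin d) ℝ) (Λhat : Fin d → ℝ)
    (hUhat : Uhatᵀ * Uhat = 1) (hΛhat : ∀ j, 0 ≤ Λhat j)
    (hopt : ∀ (U : Matrix (Fin n) (Fin d) ℝ) (Λ : Fin d → ℝ),
      Uᵀ * U = 1 → (∀ j, 0 ≤ Λ j) →
      frobSq (Aplus - Uhat * Matrix.diagonal Λhat * Uhatᵀ) ≤
        frobSq (Aplus - U * Matrix.diagonal Λ * Uᵀ))
    (Xhat : Matrix (Fin n) (Fin d) ℝ)
    (hXhat : Xhat = Uhat * Matrix.diagonal (fun j => Real.sqrt (Λhat j))) :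
    ∀ X : Matrix (Fin n) (Fin d) ℝ,
      frobSq (A - Xhat * Xhatᵀ) ≤ frobSq (A - X * Xᵀ) :=
  stmt_14_general n d A V D hV hdecomp Aplus hAplus Uhat Λhat hUhat hΛhat hopt Xhat hXhat
end
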